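/- arXiv:1811.04862 — 2 statements merged into one kernel-verified Lean document; each statement's English description precedes it below -/
import Mathlib

section
/- For ν₂ > 0, the improper integral M = ∫_{−∞}^{∞} y(t)·(ν₁ + (ν₃ − 3x(t)²)·y(t)) dt, where x(t) = √ν₂ tanh(√(ν₂/2) t) and y(t) = (ν₂/√2) sech²(√(ν₂/2) t), converges and equals (2/15)·√ν₂·(15ν₁ + 5√2·ν₂ν₃ − 3√2·ν₂²). -/
/-!
With `a = √(ν₂ / 2)` one has `x = √ν₂ tanh (a t)` and `y = √ν₂ · a (1 - tanh² (a t))`, so the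
substitution `v = tanh (a t)`, `dv = a (1 - v²) dt`, which maps `ℝ` monotonically onto `(-1, 1)`,
turns `M` into `√ν₂ ∫₋₁¹ (ν₁ + (ν₂ / √2) (ν₃ - 3 ν₂ v²) (1 - v²)) dv`, a polynomial integral.
The substitution is legitimate on the whole line because a nonnegative derivative of a function
with finite limits at `±∞` is integrable, and the polynomial factor is bounded on `[-1, 1]`.
-/

open MeasureTheory Filter Topology Set Real

theorem integrable_deriv_of_nonneg_of_tendsto {g g' : ℝ → ℝ} {m n : ℝ}
    (hderiv : ∀ x, HasDerivAt g (g' x) x) (hpos : ∀ x, 0 ≤ g' x)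
    (hbot : Tendsto g atBot (𝓝 m)) (htop : Tendsto g atTop (𝓝 n)) : Integrable g' := by
  have hint (a b : ℝ) : IntervalIntegrable g' volume a b :=
    intervalIntegral.intervalIntegrable_deriv_of_nonneg
      (fun x _ ↦ (hderiv x).continuousAt.continuousWithinAt) (fun x _ ↦ hderiv x)
      (fun x _ ↦ hpos x)
  refine integrable_of_intervalIntegral_norm_tendsto (n - m)
    (fun i ↦ (hint (-i) i).1) tendsto_neg_atTop_atBot tendsto_id ?_
  have hFTC (i : ℝ) : ∫ x in -i..i, ‖g' x‖ = g i - g (-i) := by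
    simp only [Real.norm_of_nonneg (hpos _)]
    exact intervalIntegral.integral_eq_sub_of_hasDerivAt (fun x _ ↦ hderiv x) (hint _ _)
  simp only [hFTC]
  exact htop.sub (hbot.comp tendsto_neg_atTop_atBot)

theorem integral_comp_mul_deriv_of_tendsto {f u u' : ℝ → ℝ} {m n : ℝ} (hf : Continuous f)
    (hu : ∀ x, HasDerivAt u (u' x) x) (hu' : ∀ x, 0 ≤ u' x)
    (hbot : Tendsto u atBot (𝓝 m)) (htop : Tendsto u atTop (𝓝 n)) :
    Integrable (fun x ↦ f (u x) * u' x) ∧ ∫ x, f (u x) * u' x = ∫ y in m..n, f y := by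
  have hmono : Monotone u :=
    monotone_of_deriv_nonneg (fun x ↦ (hu x).differentiableAt) fun x ↦ (hu x).deriv ▸ hu' x
  obtain ⟨C, hC⟩ := isCompact_Icc.exists_bound_of_continuousOn (hf.continuousOn (s := Icc m n))
  have hint : Integrable (fun x ↦ f (u x) * u' x) :=
    (integrable_deriv_of_nonneg_of_tendsto hu hu' hbot htop).bdd_mul
      (hf.comp (continuous_iff_continuousAt.2 fun x ↦ (hu x).continuousAt)).aestronglyMeasurable
      (ae_of_all _ fun x ↦ hC _ ⟨hmono.le_of_tendsto hbot x, hmono.ge_of_tendsto htop x⟩)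
  refine ⟨hint, ?_⟩
  have hF (y : ℝ) : HasDerivAt (fun z ↦ ∫ s in m..z, f s) (f y) y :=
    (hf.integral_hasStrictDerivAt m y).hasDerivAt
  have hFcont : Continuous fun z ↦ ∫ s in m..z, f s :=
    continuous_iff_continuousAt.2 fun y ↦ (hF y).continuousAt
  simpa using integral_of_hasDerivAt_of_tendsto (fun x ↦ (hF (u x)).comp x (hu x)) hint
    ((hFcont.tendsto m).comp hbot) ((hFcont.tendsto n).comp htop)

namespace Real

theorem tanh_eq_one_sub (x : ℝ) : tanh x = 1 - 2 / (exp (2 * x) + 1) := by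
  have h : exp (2 * x) = exp x * exp x := by rw [← exp_add]; ring_nf
  rw [tanh_eq, exp_neg, h]
  field_simp
  ring

theorem tendsto_tanh_atTop : Tendsto tanh atTop (𝓝 1) := by
  have h : Tendsto (fun x ↦ exp (2 * x) + 1) atTop atTop :=
    tendsto_atTop_add_const_right _ 1 (tendsto_exp_atTop.comp (tendsto_id.const_mul_atTop two_pos))
  simpa [← tanh_eq_one_sub] using (h.const_div_atTop 2).const_sub 1

theorem tendsto_tanh_atBot : Tendsto tanh atBot (𝓝 (-1)) := by
  simpa [Function.comp_def] using tendsto_tanh_atTop.neg.comp tendsto_neg_atBot_atTop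

theorem one_div_cosh_sq (x : ℝ) : (1 / cosh x) ^ 2 = 1 - tanh x ^ 2 := by
  have hc := (cosh_pos x).ne'
  rw [tanh_eq_sinh_div_cosh]
  field_simp
  linear_combination (cosh_sq_sub_sinh_sq x).symm

theorem hasDerivAt_tanh (x : ℝ) : HasDerivAt tanh (1 - tanh x ^ 2) x := by
  rw [show tanh = fun y ↦ sinh y / cosh y from funext tanh_eq_sinh_div_cosh]
  refine ((hasDerivAt_sinh x).div (hasDerivAt_cosh x) (cosh_pos x).ne').congr_deriv ?_
  field_simp

end Real

theorem integral_neg_one_one_add_sub_mul_one_sub_sq (A B C : ℝ) :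
    ∫ v in (-1 : ℝ)..1, (A + (B - C * v ^ 2) * (1 - v ^ 2)) = 2 * A + 4 / 3 * B - 4 / 15 * C := by
  have hexpand : (fun v : ℝ ↦ A + (B - C * v ^ 2) * (1 - v ^ 2))
      = fun v ↦ (A + B) - (B + C) * v ^ 2 + C * v ^ 4 := by
    funext v; ring
  rw [hexpand, intervalIntegral.integral_add, intervalIntegral.integral_sub]
  · simp only [intervalIntegral.integral_const, intervalIntegral.integral_const_mul, integral_pow]
    norm_num
    ring
  all_goals exact Continuous.intervalIntegrable (by fun_prop) _ _

theorem stmt_9 (ν₁ ν₂ ν₃ : ℝ) (hν₂ : 0 < ν₂) (x y : ℝ → ℝ)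
    (hxdef : ∀ t, x t = Real.sqrt ν₂ * Real.tanh (Real.sqrt (ν₂ / 2) * t))
    (hydef : ∀ t, y t = ν₂ / Real.sqrt 2 * (1 / Real.cosh (Real.sqrt (ν₂ / 2) * t)) ^ 2) :
    Integrable (fun t => y t * (ν₁ + (ν₃ - 3 * (x t) ^ 2) * y t)) volume ∧
    ∫ t : ℝ, y t * (ν₁ + (ν₃ - 3 * (x t) ^ 2) * y t)
      = (2 / 15) * Real.sqrt ν₂ *
        (15 * ν₁ + 5 * Real.sqrt 2 * ν₂ * ν₃ - 3 * Real.sqrt 2 * ν₂ ^ 2) := by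
  have hc_mul : ν₂ / √2 = √ν₂ * √(ν₂ / 2) := by
    rw [sqrt_div hν₂.le, mul_div_assoc', mul_self_sqrt hν₂.le]
  have hc_rat : ν₂ / √2 = ν₂ * √2 / 2 := by
    field_simp
    exact (sq_sqrt zero_le_two).symm
  set a := √(ν₂ / 2)
  set c := ν₂ / √2
  have ha : 0 < a := sqrt_pos.2 (half_pos hν₂)
  let f : ℝ → ℝ := fun v ↦ √ν₂ * (ν₁ + (c * ν₃ - 3 * ν₂ * c * v ^ 2) * (1 - v ^ 2))
  have hintegrand : (fun t ↦ y t * (ν₁ + (ν₃ - 3 * x t ^ 2) * y t))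
      = fun t ↦ f (tanh (a * t)) * ((1 - tanh (a * t) ^ 2) * a) := by
    funext t
    simp only [f, hxdef, hydef, one_div_cosh_sq, mul_pow, sq_sqrt hν₂.le, hc_mul]
    ring
  obtain ⟨hint, hval⟩ := integral_comp_mul_deriv_of_tendsto (f := f)
    (u := fun t ↦ tanh (a * t)) (by fun_prop)
    (fun t ↦ (hasDerivAt_tanh (a * t)).comp t (hasDerivAt_const_mul a))
    (fun t ↦ mul_nonneg (sub_nonneg.2 (tanh_sq_lt_one _).le) ha.le)
    (tendsto_tanh_atBot.comp (tendsto_id.const_mul_atBot ha))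
    (tendsto_tanh_atTop.comp (tendsto_id.const_mul_atTop ha))
  refine ⟨hintegrand ▸ hint, ?_⟩
  rw [hintegrand, hval, intervalIntegral.integral_const_mul,
    integral_neg_one_one_add_sub_mul_one_sub_sq, hc_rat]
  ring
end

section
/- Consider the 3D system ẋ = a₁₁W(z)x + a₁₂y, ẏ = a₂₁x + a₂₂y, ż = x, where W is continuous and q(z) = ∫₀ᶻ W(s)ds. Then the function H(x,y,z) = −a₂₂x + a₁₂y − a₁₂a₂₁z + a₁₁a₂₂q(z) is a first integral: along any solution, H is constant. Hence for each h ∈ ℝ the level set S_h = {(x,y,z) : H(x,y,z) = h} is invariant under the flow. -/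
/-! The function `H` is built so that its time derivative along a solution cancels term by term:
`-a₂₂ ẋ + a₁₂ ẏ - a₁₂ a₂₁ ż + a₁₁ a₂₂ W(z) ż = 0` once `ẋ, ẏ, ż` are substituted, where `q' = W` by
the fundamental theorem of calculus. A function with zero derivative everywhere is constant. -/

theorem hasDerivAt_of_eq_integral {W q : ℝ → ℝ} (hW : Continuous W)
    (hq : ∀ z, q z = ∫ s in (0:ℝ)..z, W s) (w : ℝ) : HasDerivAt q (W w) w := by
  rw [funext hq]
  exact (hW.integral_hasStrictDerivAt 0 w).hasDerivAt

theorem hasDerivAt_firstIntegral_eq_zero {a₁₁ a₁₂ a₂₁ a₂₂ : ℝ} {W q x y z : ℝ → ℝ}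
    (hq : ∀ w, HasDerivAt q (W w) w)
    (hx : ∀ t, HasDerivAt x (a₁₁ * W (z t) * x t + a₁₂ * y t) t)
    (hy : ∀ t, HasDerivAt y (a₂₁ * x t + a₂₂ * y t) t)
    (hz : ∀ t, HasDerivAt z (x t) t) (t : ℝ) :
    HasDerivAt (fun t => -a₂₂ * x t + a₁₂ * y t - a₁₂ * a₂₁ * z t + a₁₁ * a₂₂ * q (z t)) 0 t := by
  have hqz : HasDerivAt (fun t => q (z t)) (W (z t) * x t) t := (hq (z t)).comp t (hz t)
  refine (((((hx t).const_mul (-a₂₂)).add ((hy t).const_mul a₁₂)).sub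
    ((hz t).const_mul (a₁₂ * a₂₁))).add (hqz.const_mul (a₁₁ * a₂₂))).congr_deriv ?_
  ring

theorem stmt_14 (a₁₁ a₁₂ a₂₁ a₂₂ : ℝ) (W q : ℝ → ℝ)
    (hW : Continuous W)
    (hq : ∀ z, q z = ∫ s in (0:ℝ)..z, W s)
    (x y z : ℝ → ℝ)
    (hx : ∀ t, HasDerivAt x (a₁₁ * W (z t) * x t + a₁₂ * y t) t)
    (hy : ∀ t, HasDerivAt y (a₂₁ * x t + a₂₂ * y t) t)
    (hz : ∀ t, HasDerivAt z (x t) t)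
    (H : ℝ → ℝ → ℝ → ℝ)
    (hH : ∀ u v w, H u v w = -a₂₂ * u + a₁₂ * v - a₁₂ * a₂₁ * w + a₁₁ * a₂₂ * q w) :
    (∀ t, H (x t) (y t) (z t) = H (x 0) (y 0) (z 0)) ∧
    (∀ h : ℝ, H (x 0) (y 0) (z 0) = h →
      ∀ t, (x t, y t, z t) ∈ {p : ℝ × ℝ × ℝ | H p.1 p.2.1 p.2.2 = h}) := by
  have hderiv : ∀ t, HasDerivAt (fun t => H (x t) (y t) (z t)) 0 t := by
    simp only [hH]
    exact hasDerivAt_firstIntegral_eq_zero (hasDerivAt_of_eq_integral hW hq) hx hy hz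
  have hconst : ∀ t, H (x t) (y t) (z t) = H (x 0) (y 0) (z 0) := fun t =>
    is_const_of_deriv_eq_zero (fun s => (hderiv s).differentiableAt) (fun s => (hderiv s).deriv) t 0
  exact ⟨hconst, fun h hh t => (hconst t).trans hh⟩
end
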